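/- arXiv:1708.01418 — 3 statements merged into one kernel-verified Lean document; each statement's English description precedes it below -/
import Mathlib

section
/- Three-term theta identity: under the theta axioms, let x₁, x₂, x₃, y₁, y₂, y₃ ∈ ℂ with x₁+x₂+x₃ = y₁+y₂+y₃ and y_i − y_j ∉ Λ for all i ≠ j. Then ∑_{i=1}^{3} [ ∏_{j=1}^{3} ϑ(y_i − x_j) ] / [ ∏_{j≠i} ϑ(y_i − y_j) ] = 0. -/
noncomputable section

/-- The lattice `ℤ + τℤ` in `ℂ`. -/
def lattice (τ : ℂ) : Set ℂ := {z : ℂ | ∃ n m : ℤ, z = (n : ℂ) + (m : ℂ) * τ}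

/-!
Put `p(z) = ∏ⱼ ϑ(z - xⱼ)` and `q(z) = ∏ⱼ ϑ(z - yⱼ)`. Since `∑ xⱼ = ∑ yⱼ`, both pick up the same
factor under translation by a period, so `p / q` is elliptic; its poles are simple, at `yᵢ + Λ`,
with residues `Rᵢ` the summands of the identity. Subtracting `∑ᵢ Rᵢ ϑ'/ϑ(z - yᵢ)` removes them and
leaves an entire function `Φ` with `Φ(z + 1) = Φ(z)` and `Φ(z + τ) = Φ(z) + 2πi ∑ᵢ Rᵢ`, because
`ϑ'/ϑ` drops by `2πi` under `z ↦ z + τ`. Then `Φ'` is doubly periodic, hence bounded and constant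
by Liouville, so `Φ` is affine and the two relations force `∑ᵢ Rᵢ = 0`.
-/

open Complex Finset Function Bornology

theorem exists_int_add_int_mul_add_mem_parallelogram {τ : ℂ} (hτ : τ.im ≠ 0) (z : ℂ) :
    ∃ (n m : ℤ) (p : ℝ × ℝ), p ∈ Set.Icc (0 : ℝ) 1 ×ˢ Set.Icc (0 : ℝ) 1 ∧
      z = p.1 + p.2 * τ + (n + m * τ) := by
  set s := z.im / τ.im
  set r := z.re - s * τ.re
  refine ⟨⌊r⌋, ⌊s⌋, (Int.fract r, Int.fract s),
    ⟨⟨Int.fract_nonneg r, (Int.fract_lt_one r).le⟩, ⟨Int.fract_nonneg s, (Int.fract_lt_one s).le⟩⟩,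
    ?_⟩
  have hz : z = r + s * τ := by
    apply Complex.ext <;> simp [r, s]
    field_simp
  have hr : (r : ℂ) = Int.fract r + ⌊r⌋ := by exact_mod_cast (Int.fract_add_floor r).symm
  have hs : (s : ℂ) = Int.fract s + ⌊s⌋ := by exact_mod_cast (Int.fract_add_floor s).symm
  linear_combination hz + hr + τ * hs

theorem isBounded_range_of_periodic {τ : ℂ} (hτ : τ.im ≠ 0) {g : ℂ → ℂ} (hg : Continuous g)
    (h1 : Periodic g 1) (hτg : Periodic g τ) : IsBounded (Set.range g) := by
  have hK : IsCompact ((fun p : ℝ × ℝ => (p.1 : ℂ) + p.2 * τ) ''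
      (Set.Icc (0 : ℝ) 1 ×ˢ Set.Icc (0 : ℝ) 1)) :=
    (isCompact_Icc.prod isCompact_Icc).image (by fun_prop)
  refine (hK.image hg).isBounded.subset ?_
  rintro _ ⟨z, rfl⟩
  obtain ⟨n, m, p, hp, rfl⟩ := exists_int_add_int_mul_add_mem_parallelogram hτ z
  refine ⟨_, ⟨p, hp, rfl⟩, ?_⟩
  simpa using (((h1.int_mul n).add_period (hτg.int_mul m)) (p.1 + p.2 * τ)).symm

theorem periodic_deriv_of_add_const {Φ : ℂ → ℂ} {w c : ℂ} (h : ∀ z, Φ (z + w) = Φ z + c) :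
    Periodic (deriv Φ) w := fun z => by
  rw [← deriv_comp_add_const, funext h, deriv_add_const]

theorem eq_zero_of_periodic_of_add_const {τ c : ℂ} (hτ : τ.im ≠ 0) {Φ : ℂ → ℂ}
    (hΦ : Differentiable ℂ Φ) (h1 : Periodic Φ 1) (hτΦ : ∀ z, Φ (z + τ) = Φ z + c) : c = 0 := by
  have hbdd : IsBounded (Set.range (deriv Φ)) :=
    isBounded_range_of_periodic hτ hΦ.deriv.continuous
      (periodic_deriv_of_add_const (c := 0) (by simpa using h1)) (periodic_deriv_of_add_const hτΦ)
  set k := deriv Φ 0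
  have hderiv (z : ℂ) : HasDerivAt (fun z => Φ z - k * z) 0 z := by
    have := (hΦ z).hasDerivAt.sub ((hasDerivAt_id' z).const_mul k)
    rwa [hΦ.deriv.apply_eq_apply_of_bounded hbdd z 0, mul_one, sub_self] at this
  have hlin (z : ℂ) : Φ z - k * z = Φ 0 := by
    simpa using is_const_of_deriv_eq_zero (fun z => (hderiv z).differentiableAt)
      (fun z => (hderiv z).deriv) z 0
  have hk : k = 0 := by linear_combination (by simpa using h1 0 : Φ 1 = Φ 0) - hlin 1
  linear_combination hlin τ - (by simpa using hτΦ 0 : Φ τ = Φ 0 + c) + τ * hk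

theorem differentiable_dslope {f : ℂ → ℂ} (hf : Differentiable ℂ f) (a : ℂ) :
    Differentiable ℂ (dslope f a) := fun z =>
  ((differentiableOn_dslope Filter.univ_mem).2 hf.differentiableOn z
    (Set.mem_univ z)).differentiableAt Filter.univ_mem

theorem dense_setOf_ne_zero_of_deriv_ne_zero {g : ℂ → ℂ} (hg : Differentiable ℂ g)
    (hsimple : ∀ a, g a = 0 → deriv g a ≠ 0) : Dense {z | g z ≠ 0} := by
  intro a
  by_cases ha : g a = 0
  · exact mem_closure_iff_frequently.2
      (((hg a).hasDerivAt.eventually_ne (hsimple a ha)).frequently.filter_mono nhdsWithin_le_nhds)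
  · exact subset_closure ha

theorem exists_differentiable_eq_mul_of_deriv_ne_zero {f g : ℂ → ℂ} (hf : Differentiable ℂ f)
    (hg : Differentiable ℂ g) (hsimple : ∀ a, g a = 0 → deriv g a ≠ 0)
    (hfg : ∀ a, g a = 0 → f a = 0) : ∃ h : ℂ → ℂ, Differentiable ℂ h ∧ ∀ z, f z = h z * g z := by
  classical
  refine ⟨fun z => if g z = 0 then deriv f z / deriv g z else f z / g z, fun a => ?_, fun z => ?_⟩
  · by_cases ha : g a = 0
    -- near a zero `a` of `g`, the quotient is `dslope f a / dslope g a`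
    · have hdf := differentiable_dslope hf a
      have hdg := differentiable_dslope hg a
      have hga : dslope g a a ≠ 0 := by rw [dslope_same]; exact hsimple a ha
      refine ((hdf a).div (hdg a) hga).congr_of_eventuallyEq ?_
      filter_upwards [(hdg a).continuousAt.eventually_ne hga] with z hz
      rcases eq_or_ne z a with rfl | hza
      · simp [ha, dslope_same]
      · have hgz : g z = (z - a) * dslope g a z := by
          simpa using (sub_smul_dslope_of_zero ha z).symm
        have hfz : f z = (z - a) * dslope f a z := by
          simpa using (sub_smul_dslope_of_zero (hfg a ha) z).symm
        have hgz0 : g z ≠ 0 := by rw [hgz]; exact mul_ne_zero (sub_ne_zero.2 hza) hz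
        change (if g z = 0 then _ else f z / g z) = dslope f a z / dslope g a z
        rw [if_neg hgz0, hfz, hgz, mul_div_mul_left _ _ (sub_ne_zero.2 hza)]
    · refine ((hf a).div (hg a) ha).congr_of_eventuallyEq ?_
      filter_upwards [(hg a).continuousAt.eventually_ne ha] with z hz
      simp [hz]
  · by_cases hz : g z = 0
    · simp [hz, hfg z hz]
    · simp [hz]

def IsQuasiPeriod (ϑ : ℂ → ℂ) (w c β : ℂ) : Prop :=
  ∀ z, ϑ (z + w) = c * exp (β * z) * ϑ z

namespace IsQuasiPeriod

variable {ϑ : ℂ → ℂ} {w w' c c' β β' : ℂ}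

theorem add (h : IsQuasiPeriod ϑ w c β) (h' : IsQuasiPeriod ϑ w' c' β') :
    IsQuasiPeriod ϑ (w + w') (c * c' * exp (β * w')) (β + β') := fun z => by
  rw [← add_assoc, add_right_comm, h, h', mul_add, exp_add, add_mul, exp_add]
  ring

theorem neg (h : IsQuasiPeriod ϑ w c β) (hc : c ≠ 0) :
    IsQuasiPeriod ϑ (-w) (c⁻¹ * exp (β * w)) (-β) := fun z => by
  have hz := h (z + -w)
  rw [neg_add_cancel_right] at hz
  have hexp : exp (β * w) * exp (-β * z) * exp (β * (z + -w)) = 1 := by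
    rw [← exp_add, ← exp_add, ← exp_zero]
    ring_nf
  rw [hz]
  linear_combination (-ϑ (z + -w) * c⁻¹ * c) * hexp - ϑ (z + -w) * inv_mul_cancel₀ hc

theorem deriv_add (hϑ : Differentiable ℂ ϑ) (h : IsQuasiPeriod ϑ w c β) (z : ℂ) :
    deriv ϑ (z + w) = c * exp (β * z) * (β * ϑ z + deriv ϑ z) := by
  have hR : HasDerivAt (fun u => c * exp (β * u) * ϑ u)
      (c * exp (β * z) * (β * ϑ z + deriv ϑ z)) z := by
    refine ((((hasDerivAt_id' z).const_mul β).cexp.const_mul c).fun_mul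
      (hϑ z).hasDerivAt).congr_deriv ?_
    ring
  rw [← deriv_comp_add_const, funext h, hR.deriv]

theorem prod_add {ι : Type*} (h : IsQuasiPeriod ϑ w c β) (s : Finset ι) (v : ι → ℂ) (z : ℂ) :
    ∏ j ∈ s, ϑ (z + w - v j) = (∏ j ∈ s, c * exp (β * (z - v j))) * ∏ j ∈ s, ϑ (z - v j) := by
  rw [← prod_mul_distrib]
  exact prod_congr rfl fun j _ => by rw [add_sub_right_comm, h]

end IsQuasiPeriod

def quasiPeriods (ϑ : ℂ → ℂ) : AddSubgroup ℂ where
  carrier := {w | ∃ c β, c ≠ 0 ∧ IsQuasiPeriod ϑ w c β}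
  zero_mem' := ⟨1, 0, one_ne_zero, fun z => by simp⟩
  add_mem' := fun ⟨_, _, hc, h⟩ ⟨_, _, hc', h'⟩ =>
    ⟨_, _, mul_ne_zero (mul_ne_zero hc hc') (exp_ne_zero _), h.add h'⟩
  neg_mem' := fun ⟨_, _, hc, h⟩ => ⟨_, _, mul_ne_zero (inv_ne_zero hc) (exp_ne_zero _), h.neg hc⟩

theorem deriv_ne_zero_of_mem_quasiPeriods {ϑ : ℂ → ℂ} {w : ℂ} (hϑ : Differentiable ℂ ϑ)
    (h0 : ϑ 0 = 0) (h'0 : deriv ϑ 0 ≠ 0) (hw : w ∈ quasiPeriods ϑ) : deriv ϑ w ≠ 0 := by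
  obtain ⟨c, β, hc, h⟩ := hw
  rw [← zero_add w, h.deriv_add hϑ, h0]
  simp [hc, h'0]

theorem lattice_subset_of_mem {G : AddSubgroup ℂ} {τ : ℂ} (h1 : (1 : ℂ) ∈ G) (hτ : τ ∈ G) :
    lattice τ ⊆ G := by
  rintro _ ⟨n, m, rfl⟩
  simpa using add_mem (zsmul_mem h1 n) (zsmul_mem hτ m)

theorem sub_mem_lattice {τ a b : ℂ} (ha : a ∈ lattice τ) (hb : b ∈ lattice τ) :
    a - b ∈ lattice τ := by
  obtain ⟨n, m, rfl⟩ := ha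
  obtain ⟨n', m', rfl⟩ := hb
  exact ⟨n - n', m - m', by push_cast; ring⟩

section ThetaProducts

variable {ι : Type*} [Fintype ι] {ϑ : ℂ → ℂ} {w c β : ℂ}

def thetaProd (ϑ : ℂ → ℂ) (v : ι → ℂ) (z : ℂ) : ℂ := ∏ j, ϑ (z - v j)

theorem thetaProd_add (h : IsQuasiPeriod ϑ w c β) (v : ι → ℂ) (z : ℂ) :
    thetaProd ϑ v (z + w) = (∏ j, c * exp (β * (z - v j))) * thetaProd ϑ v z :=
  h.prod_add univ v z

theorem prod_mul_exp_eq_of_sum_eq {x y : ι → ℂ} (hsum : ∑ i, x i = ∑ i, y i) (z : ℂ) :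
    ∏ j, c * exp (β * (z - x j)) = ∏ j, c * exp (β * (z - y j)) := by
  simp only [prod_mul_distrib, ← exp_sum, ← mul_sum, sum_sub_distrib, hsum]

theorem thetaProd_eq_zero_iff {τ : ℂ} (hzero : ∀ z, ϑ z = 0 ↔ z ∈ lattice τ) (v : ι → ℂ) (a : ℂ) :
    thetaProd ϑ v a = 0 ↔ ∃ i, a - v i ∈ lattice τ := by
  simp [thetaProd, prod_eq_zero_iff, hzero]

variable [DecidableEq ι]

def thetaProdDerivTerm (ϑ : ℂ → ℂ) (v : ι → ℂ) (i : ι) (z : ℂ) : ℂ :=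
  deriv ϑ (z - v i) * ∏ j ∈ univ.erase i, ϑ (z - v j)

def thetaResidue (ϑ : ℂ → ℂ) (x y : ι → ℂ) (i : ι) : ℂ :=
  thetaProd ϑ x (y i) / ∏ j ∈ univ.erase i, ϑ (y i - y j)

-- `q * (p / q - ∑ᵢ Rᵢ ϑ'(z - yᵢ) / ϑ(z - yᵢ))` for `p = thetaProd ϑ x`, `q = thetaProd ϑ y` and
-- the residues `Rᵢ` of `p / q` at `yᵢ`; with the principal parts removed, it vanishes where `q`
-- does.
def thetaNumerator (ϑ : ℂ → ℂ) (x y : ι → ℂ) (z : ℂ) : ℂ :=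
  thetaProd ϑ x z - ∑ i, thetaResidue ϑ x y i * thetaProdDerivTerm ϑ y i z

theorem hasDerivAt_thetaProd (hϑ : Differentiable ℂ ϑ) (v : ι → ℂ) (z : ℂ) :
    HasDerivAt (thetaProd ϑ v) (∑ i, thetaProdDerivTerm ϑ v i z) z := by
  have := HasDerivAt.fun_finsetProd (u := univ) fun i _ =>
    ((hϑ (z - v i)).hasDerivAt.comp_sub_const z (v i))
  simp only [smul_eq_mul, mul_comm] at this
  exact this

theorem differentiable_thetaNumerator (hϑ : Differentiable ℂ ϑ) (x y : ι → ℂ) :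
    Differentiable ℂ (thetaNumerator ϑ x y) := by
  have := hϑ.deriv
  unfold thetaNumerator thetaProd thetaProdDerivTerm
  fun_prop

theorem thetaProdDerivTerm_add (hϑ : Differentiable ℂ ϑ) (h : IsQuasiPeriod ϑ w c β)
    (v : ι → ℂ) (i : ι) (z : ℂ) :
    thetaProdDerivTerm ϑ v i (z + w) =
      (∏ j, c * exp (β * (z - v j))) * (thetaProdDerivTerm ϑ v i z + β * thetaProd ϑ v z) := by
  rw [thetaProdDerivTerm, thetaProdDerivTerm, thetaProd, add_sub_right_comm, h.deriv_add hϑ,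
    h.prod_add, ← mul_prod_erase univ (fun j => c * exp (β * (z - v j))) (mem_univ i),
    ← mul_prod_erase univ (fun j => ϑ (z - v j)) (mem_univ i)]
  ring

theorem thetaNumerator_add (hϑ : Differentiable ℂ ϑ) (h : IsQuasiPeriod ϑ w c β) {x y : ι → ℂ}
    (hsum : ∑ i, x i = ∑ i, y i) (z : ℂ) :
    thetaNumerator ϑ x y (z + w) = (∏ j, c * exp (β * (z - y j))) *
      (thetaNumerator ϑ x y z - β * (∑ i, thetaResidue ϑ x y i) * thetaProd ϑ y z) := by
  set M := ∏ j, c * exp (β * (z - y j))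
  have hsumT : ∑ i, thetaResidue ϑ x y i * thetaProdDerivTerm ϑ y i (z + w) =
      M * ∑ i, thetaResidue ϑ x y i * thetaProdDerivTerm ϑ y i z +
        M * β * thetaProd ϑ y z * ∑ i, thetaResidue ϑ x y i := by
    rw [mul_sum, mul_sum, ← sum_add_distrib]
    exact sum_congr rfl fun i _ => by rw [thetaProdDerivTerm_add hϑ h]; ring
  rw [thetaNumerator, thetaNumerator, hsumT, thetaProd_add h, prod_mul_exp_eq_of_sum_eq hsum]
  ring

theorem thetaNumerator_apply_self (x y : ι → ℂ) (i : ι) (h0 : ϑ 0 = 0) (h'0 : deriv ϑ 0 = 1)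
    (hy : ∏ j ∈ univ.erase i, ϑ (y i - y j) ≠ 0) : thetaNumerator ϑ x y (y i) = 0 := by
  rw [thetaNumerator, sum_eq_single i]
  · rw [thetaResidue, thetaProdDerivTerm, sub_self, h'0, one_mul, div_mul_cancel₀ _ hy, sub_self]
  · intro k _ hk
    rw [thetaProdDerivTerm, prod_eq_zero (mem_erase.2 ⟨Ne.symm hk, mem_univ i⟩) (by rwa [sub_self]),
      mul_zero, mul_zero]
  · simp

end ThetaProducts

section ThetaFunction

variable {ι : Type*} [Fintype ι] [DecidableEq ι] {ϑ : ℂ → ℂ} {τ w c β : ℂ}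

theorem deriv_thetaProd_ne_zero (hϑ : Differentiable ℂ ϑ) (hzero : ∀ z, ϑ z = 0 ↔ z ∈ lattice τ)
    (hsimple : ∀ w ∈ lattice τ, deriv ϑ w ≠ 0) {y : ι → ℂ}
    (hy : ∀ i j, i ≠ j → y i - y j ∉ lattice τ) {a : ℂ} (ha : thetaProd ϑ y a = 0) :
    deriv (thetaProd ϑ y) a ≠ 0 := by
  obtain ⟨i, hi⟩ := (thetaProd_eq_zero_iff hzero y a).1 ha
  rw [(hasDerivAt_thetaProd hϑ y a).deriv, sum_eq_single i]
  · refine mul_ne_zero (hsimple _ hi) (prod_ne_zero_iff.2 fun j hj hj0 => ?_)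
    refine hy i j (ne_of_mem_erase hj).symm ?_
    simpa using sub_mem_lattice ((hzero _).1 hj0) hi
  · intro k _ hk
    rw [thetaProdDerivTerm, prod_eq_zero (mem_erase.2 ⟨Ne.symm hk, mem_univ i⟩) ((hzero _).2 hi),
      mul_zero]
  · simp

theorem thetaNumerator_eq_zero_of_thetaProd_eq_zero (hϑ : Differentiable ℂ ϑ)
    (hzero : ∀ z, ϑ z = 0 ↔ z ∈ lattice τ) (hquasi : lattice τ ⊆ quasiPeriods ϑ)
    (h'0 : deriv ϑ 0 = 1) {x y : ι → ℂ} (hsum : ∑ i, x i = ∑ i, y i)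
    (hy : ∀ i j, i ≠ j → y i - y j ∉ lattice τ) {a : ℂ} (ha : thetaProd ϑ y a = 0) :
    thetaNumerator ϑ x y a = 0 := by
  obtain ⟨i, hi⟩ := (thetaProd_eq_zero_iff hzero y a).1 ha
  obtain ⟨c, β, -, h⟩ := hquasi hi
  have h0 : ϑ 0 = 0 := (hzero 0).2 ⟨0, 0, by simp⟩
  have hyi : ∏ j ∈ univ.erase i, ϑ (y i - y j) ≠ 0 :=
    prod_ne_zero_iff.2 fun j hj => (hzero _).not.2 (hy i j (ne_of_mem_erase hj).symm)
  have hq : thetaProd ϑ y (y i) = 0 := prod_eq_zero (mem_univ i) (by rwa [sub_self])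
  have := thetaNumerator_add hϑ h hsum (y i)
  rw [add_sub_cancel, thetaNumerator_apply_self x y i h0 h'0 hyi, hq] at this
  simpa using this

theorem add_eq_sub_of_thetaNumerator_eq_mul (hϑ : Differentiable ℂ ϑ) (h : IsQuasiPeriod ϑ w c β)
    (hc : c ≠ 0) {x y : ι → ℂ} (hsum : ∑ i, x i = ∑ i, y i) {Φ : ℂ → ℂ} (hΦ : Continuous Φ)
    (hdense : Dense {z | thetaProd ϑ y z ≠ 0})
    (hΦD : ∀ z, thetaNumerator ϑ x y z = Φ z * thetaProd ϑ y z) (z : ℂ) :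
    Φ (z + w) = Φ z - β * ∑ i, thetaResidue ϑ x y i := by
  suffices key : (fun z => Φ (z + w)) = fun z => Φ z - β * ∑ i, thetaResidue ϑ x y i from
    congrFun key z
  refine Continuous.ext_on hdense (by fun_prop) (by fun_prop) fun z (hz : thetaProd ϑ y z ≠ 0) => ?_
  have hM : ∏ j, c * exp (β * (z - y j)) ≠ 0 :=
    prod_ne_zero_iff.2 fun j _ => mul_ne_zero hc (exp_ne_zero _)
  have e := thetaNumerator_add hϑ h hsum z
  rw [hΦD, hΦD, thetaProd_add h] at e
  exact mul_right_cancel₀ (mul_ne_zero hM hz) (by linear_combination e)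

end ThetaFunction

theorem sum_thetaResidue_eq_zero {ι : Type*} [Fintype ι] [DecidableEq ι] {τ : ℂ} (hτ : τ.im ≠ 0)
    {ϑ : ℂ → ℂ} (hϑ : Differentiable ℂ ϑ) (hzero : ∀ z, ϑ z = 0 ↔ z ∈ lattice τ)
    (h'0 : deriv ϑ 0 = 1) (h1 : ∀ z, ϑ (z + 1) = -ϑ z)
    (hτϑ : IsQuasiPeriod ϑ τ (-exp (-Real.pi * I * τ)) (-2 * Real.pi * I))
    {x y : ι → ℂ} (hsum : ∑ i, x i = ∑ i, y i) (hy : ∀ i j, i ≠ j → y i - y j ∉ lattice τ) :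
    ∑ i, thetaResidue ϑ x y i = 0 := by
  have h1ϑ : IsQuasiPeriod ϑ 1 (-1) 0 := fun z => by simp [h1]
  have hcτ : -exp (-Real.pi * I * τ) ≠ 0 := neg_ne_zero.2 (exp_ne_zero _)
  have hquasi : lattice τ ⊆ quasiPeriods ϑ :=
    lattice_subset_of_mem ⟨_, _, by norm_num, h1ϑ⟩ ⟨_, _, hcτ, hτϑ⟩
  have hsimple (a : ℂ) (ha : thetaProd ϑ y a = 0) : deriv (thetaProd ϑ y) a ≠ 0 :=
    deriv_thetaProd_ne_zero hϑ hzero (fun w hw => deriv_ne_zero_of_mem_quasiPeriods hϑ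
      ((hzero 0).2 ⟨0, 0, by simp⟩) (by simp [h'0]) (hquasi hw)) hy ha
  have hq : Differentiable ℂ (thetaProd ϑ y) := fun z =>
    (hasDerivAt_thetaProd hϑ y z).differentiableAt
  obtain ⟨Φ, hΦ, hΦD⟩ := exists_differentiable_eq_mul_of_deriv_ne_zero
    (differentiable_thetaNumerator hϑ x y) hq hsimple
    fun a => thetaNumerator_eq_zero_of_thetaProd_eq_zero hϑ hzero hquasi h'0 hsum hy
  have hdense := dense_setOf_ne_zero_of_deriv_ne_zero hq hsimple
  have hΦ1 :=
    add_eq_sub_of_thetaNumerator_eq_mul hϑ h1ϑ (by norm_num) hsum hΦ.continuous hdense hΦD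
  have hΦτ := add_eq_sub_of_thetaNumerator_eq_mul hϑ hτϑ hcτ hsum hΦ.continuous hdense hΦD
  have := eq_zero_of_periodic_of_add_const hτ hΦ (fun z => by simpa using hΦ1 z)
    fun z => (hΦτ z).trans (sub_eq_add_neg _ _)
  simpa [Real.pi_ne_zero, I_ne_zero, ofReal_eq_zero] using this

theorem three_term_theta_identity_general
    (τ : ℂ) (hτ : 0 < τ.im)
    (ϑ : ℂ → ℂ)
    (hϑ_hol : Differentiable ℂ ϑ)
    (hϑ_zero : ∀ z : ℂ, ϑ z = 0 ↔ z ∈ lattice τ)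
    (hϑ_deriv : deriv ϑ 0 = 1)
    (hϑ_per1 : ∀ z : ℂ, ϑ (z + 1) = -ϑ z)
    (hϑ_perτ : ∀ z : ℂ, ϑ (z + τ) =
      -Complex.exp (-(Real.pi : ℂ) * Complex.I * τ) *
        Complex.exp (-2 * (Real.pi : ℂ) * Complex.I * z) * ϑ z)
    (x y : Fin 3 → ℂ)
    (hsum : ∑ i, x i = ∑ i, y i)
    (hy : ∀ i j : Fin 3, i ≠ j → y i - y j ∉ lattice τ) :
    ∑ i : Fin 3, (∏ j : Fin 3, ϑ (y i - x j)) /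
      (∏ j ∈ Finset.univ.erase i, ϑ (y i - y j)) = 0 :=
  sum_thetaResidue_eq_zero hτ.ne' hϑ_hol hϑ_zero hϑ_deriv hϑ_per1 hϑ_perτ hsum hy

/-- Four-term theta identity (three-term variant used for relation EQ3): if `∑ xᵢ = ∑ yᵢ` and `yᵢ − yⱼ ∉ Λ` for `i ≠ j`,
then `∑ᵢ ∏ⱼ ϑ(yᵢ−xⱼ) / ∏_{j≠i} ϑ(yᵢ−yⱼ) = 0`. -/
theorem three_term_theta_identity
    (τ : ℂ) (hτ : 0 < τ.im)
    (ϑ : ℂ → ℂ)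
    (hϑ_hol : Differentiable ℂ ϑ)
    (hϑ_zero : ∀ z : ℂ, ϑ z = 0 ↔ z ∈ lattice τ)
    (hϑ_deriv : deriv ϑ 0 = 1)
    (hϑ_per1 : ∀ z : ℂ, ϑ (z + 1) = -ϑ z)
    (hϑ_odd : ∀ z : ℂ, ϑ (-z) = -ϑ z)
    (hϑ_perτ : ∀ z : ℂ, ϑ (z + τ) =
      -Complex.exp (-(Real.pi : ℂ) * Complex.I * τ) *
        Complex.exp (-2 * (Real.pi : ℂ) * Complex.I * z) * ϑ z)
    (x y : Fin 3 → ℂ)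
    (hsum : ∑ i, x i = ∑ i, y i)
    (hy : ∀ i j : Fin 3, i ≠ j → y i - y j ∉ lattice τ) :
    ∑ i : Fin 3, (∏ j : Fin 3, ϑ (y i - x j)) /
      (∏ j ∈ Finset.univ.erase i, ϑ (y i - y j)) = 0 :=
  three_term_theta_identity_general τ hτ ϑ hϑ_hol hϑ_zero hϑ_deriv hϑ_per1 hϑ_perτ x y hsum hy
end
end

section
/- The theta identity underlying relation EQ3 (Proposition 6.5): under the theta axioms, let u, v, z, λ, a ∈ ℂ with u−v−a ∉ Λ, v+z ∉ Λ, and u+z−a ∉ Λ. Then ϑ(v+z+λ)·ϑ(u+z+a)·ϑ(λ+2a) / (ϑ(v+z)·ϑ(u+z−a)) − ϑ(u−v+a)·ϑ(v+z+λ+2a)·ϑ(λ) / (ϑ(u−v−a)·ϑ(v+z)) − ϑ(2a)·ϑ(u−v−a−λ)·ϑ(u+z+λ+a) / (ϑ(u−v−a)·ϑ(u+z−a)) = 0. -/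
noncomputable section

/-!
After clearing denominators the identity reads `T x = 0`, where `p = v + z`, `b = 2a`,
`s = u + z + a`, `x = λ`. Put `c = p + b`. By oddness `T` is a combination of products
`ϑ (x + α) * ϑ (x + β)` with `α + β = c`; each of them is `1`-periodic and picks up the same factor
`exp (-2πi (τ + 2x + c))` under `x ↦ x + τ`, so `T / G` with `G x = ϑ x * ϑ (x + c)` is doubly
periodic. `T` vanishes at the simple zeros `0` and `-c` of `G`, so `T / G` extends to a bounded
entire function, a constant by Liouville; as `T (-p) = 0 ≠ G (-p)`, the constant is `0`. The
conditions `p, b, c ∉ Λ` this needs are removed by continuity.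
-/

open Complex Filter Topology Set Bornology

def removeSingularities (q : ℂ → ℂ) (x : ℂ) : ℂ := limUnder (𝓝[≠] x) q

section RemovableSingularities

variable {q h f g : ℂ → ℂ} {x ω : ℂ}

lemma removeSingularities_eq (hqh : q =ᶠ[𝓝[≠] x] h) (hh : ContinuousAt h x) :
    removeSingularities q x = h x :=
  ((hh.tendsto.mono_left nhdsWithin_le_nhds).congr' hqh.symm).limUnder_eq

lemma removeSingularities_eventuallyEq (hqh : ∀ᶠ y in 𝓝 x, y ≠ x → q y = h y)
    (hh : ∀ᶠ y in 𝓝 x, ContinuousAt h y) : removeSingularities q =ᶠ[𝓝 x] h := by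
  filter_upwards [hqh.eventually_nhds, hh] with y hy hcont
  have hne : ∀ᶠ w in 𝓝[≠] y, w ≠ x := by
    rcases eq_or_ne y x with rfl | hyx
    · exact self_mem_nhdsWithin
    · exact nhdsWithin_le_nhds (eventually_ne_nhds hyx)
  exact removeSingularities_eq
    ((hy.filter_mono nhdsWithin_le_nhds).and hne |>.mono fun w hw => hw.1 hw.2) hcont

lemma Function.Periodic.removeSingularities (hq : q.Periodic ω) :
    (removeSingularities q).Periodic ω := fun x => by
  simp only [_root_.removeSingularities, ← map_add_right_nhdsNE, limUnder, map_map]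
  rw [show q ∘ (· + ω) = q from funext hq]

lemma differentiableAt_removeSingularities_div_of_ne_zero (hf : Differentiable ℂ f)
    (hg : Differentiable ℂ g) (hx : g x ≠ 0) :
    DifferentiableAt ℂ (removeSingularities (f / g)) x := by
  have hne : ∀ᶠ y in 𝓝 x, g y ≠ 0 := hg.continuous.continuousAt.eventually_ne hx
  refine ((hf x).div (hg x) hx).congr_of_eventuallyEq <|
    removeSingularities_eventuallyEq (.of_forall fun _ _ => rfl) ?_
  filter_upwards [hne] with y hy
  exact ((hf y).div (hg y) hy).continuousAt

lemma Differentiable.dslope (hf : Differentiable ℂ f) (x : ℂ) : Differentiable ℂ (dslope f x) := by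
  simpa [differentiableOn_univ] using
    (Complex.differentiableOn_dslope univ_mem).mpr hf.differentiableOn

lemma differentiableAt_removeSingularities_div_of_deriv_ne_zero (hf : Differentiable ℂ f)
    (hg : Differentiable ℂ g) (hfx : f x = 0) (hgx : g x = 0) (hg' : deriv g x ≠ 0) :
    DifferentiableAt ℂ (removeSingularities (f / g)) x := by
  have hdf := hf.dslope x
  have hdg := hg.dslope x
  have hne : ∀ᶠ y in 𝓝 x, dslope g x y ≠ 0 :=
    hdg.continuous.continuousAt.eventually_ne (by rwa [dslope_same])
  refine ((hdf x).div (hdg x) (by rwa [dslope_same])).congr_of_eventuallyEq <|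
    removeSingularities_eventuallyEq (.of_forall fun y hyx => ?_) ?_
  · have hyx' : y - x ≠ 0 := sub_ne_zero.mpr hyx
    simp only [Pi.div_apply, dslope_of_ne _ hyx, slope_def_field, hfx, hgx, sub_zero]
    field_simp
  · filter_upwards [hne] with y hy
    exact ((hdf y).div (hdg y) hy).continuousAt

end RemovableSingularities

lemma countable_lattice (τ : ℂ) : (lattice τ).Countable := by
  have : lattice τ = range (fun nm : ℤ × ℤ => (nm.1 : ℂ) + (nm.2 : ℂ) * τ) := by
    ext w; simp [lattice, eq_comm]
  rw [this]
  exact countable_range _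

lemma Function.Periodic.of_mem_lattice {α : Type*} {q : ℂ → α} {τ ω : ℂ} (h1 : q.Periodic 1)
    (hτ : q.Periodic τ) (hω : ω ∈ lattice τ) : q.Periodic ω := by
  obtain ⟨n, m, rfl⟩ := hω
  simpa using (h1.int_mul n).add_period (hτ.int_mul m)

lemma Function.Periodic.differentiableAt_add {q : ℂ → ℂ} {ω y : ℂ} (hq : q.Periodic ω)
    (hy : DifferentiableAt ℂ q y) : DifferentiableAt ℂ q (y + ω) :=
  differentiableAt_comp_add_const.mp (by rwa [show (fun x => q (x + ω)) = q from funext hq])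

lemma linearIndependent_one_of_im_ne_zero {τ : ℂ} (hτ : τ.im ≠ 0) :
    LinearIndependent ℝ ![1, τ] := by
  refine LinearIndependent.pair_iff.mpr fun s t hst => ?_
  have ht : t = 0 := by simpa [hτ] using congrArg Complex.im hst
  exact ⟨by simpa [ht] using congrArg Complex.re hst, ht⟩

lemma isBounded_range_of_periodic_s6 {τ : ℂ} (hτ : τ.im ≠ 0) {q : ℂ → ℂ} (hq : Continuous q)
    (h1 : q.Periodic 1) (hτq : q.Periodic τ) : IsBounded (range q) := by
  let L : PeriodPair := ⟨1, τ, linearIndependent_one_of_im_ne_zero hτ⟩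
  have hcpt : IsCompact (closure (ZSpan.fundamentalDomain L.basis)) :=
    (ZSpan.fundamentalDomain_isBounded L.basis).isCompact_closure
  refine (hcpt.image hq).isBounded.subset ?_
  rintro _ ⟨x, rfl⟩
  refine ⟨ZSpan.fract L.basis x, subset_closure (ZSpan.fract_mem_fundamentalDomain _ x), ?_⟩
  have hfloor : (ZSpan.floor L.basis x : ℂ) ∈ lattice τ := by
    have hmem : (ZSpan.floor L.basis x : ℂ) ∈ L.lattice := by
      rw [L.lattice_eq_span_range_basis]
      exact (ZSpan.floor L.basis x).2
    obtain ⟨m, n, h⟩ := PeriodPair.mem_lattice.mp hmem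
    exact ⟨m, n, by simpa [L] using h.symm⟩
  exact (h1.of_mem_lattice hτq hfloor).sub_eq x

theorem exists_eq_const_mul_of_periodic_div {τ : ℂ} (hτ : τ.im ≠ 0) {f g : ℂ → ℂ}
    (hf : Differentiable ℂ f) (hg : Differentiable ℂ g)
    (h1 : (f / g).Periodic 1) (hτfg : (f / g).Periodic τ)
    (hzero : ∀ x, g x = 0 → ∃ y, x - y ∈ lattice τ ∧ f y = 0 ∧ g y = 0 ∧ deriv g y ≠ 0) :
    ∃ K, ∀ x, f x = K * g x := by
  set q := removeSingularities (f / g)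
  have hq1 : q.Periodic 1 := h1.removeSingularities
  have hqτ : q.Periodic τ := hτfg.removeSingularities
  have hqd : Differentiable ℂ q := fun x => by
    by_cases hx : g x = 0
    · obtain ⟨y, hxy, hfy, hgy, hg'y⟩ := hzero x hx
      simpa using (hq1.of_mem_lattice hqτ hxy).differentiableAt_add
        (differentiableAt_removeSingularities_div_of_deriv_ne_zero hf hg hfy hgy hg'y)
    · exact differentiableAt_removeSingularities_div_of_ne_zero hf hg hx
  have hq_const := hqd.apply_eq_apply_of_bounded
    (isBounded_range_of_periodic_s6 hτ hqd.continuous hq1 hqτ)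
  obtain ⟨x₀, hx₀⟩ : ∃ x₀, g x₀ ≠ 0 := by
    by_contra! hg0
    obtain ⟨y, -, -, -, hy⟩ := hzero 0 (hg0 0)
    exact hy (by simp [show g = 0 from funext hg0])
  refine ⟨q x₀, congrFun (AnalyticOnNhd.eq_of_eventuallyEq (fun z _ => hf.analyticAt z)
    (fun z _ => (hg.const_mul (q x₀)).analyticAt z) (z₀ := x₀) ?_)⟩
  filter_upwards [hg.continuous.continuousAt.eventually_ne hx₀] with x hx
  have hqx : q x = f x / g x :=
    removeSingularities_eq (.of_forall fun _ => rfl) ((hf x).div (hg x) hx).continuousAt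
  rw [← hq_const x x₀, hqx, div_mul_cancel₀ _ hx]

lemma periodic_div_of_common_factor {f g m : ℂ → ℂ} {ω : ℂ} (hm : ∀ x, m x ≠ 0)
    (hf : ∀ x, f (x + ω) = m x * f x) (hg : ∀ x, g (x + ω) = m x * g x) :
    (f / g).Periodic ω := fun x => by
  simp only [Pi.div_apply, hf, hg, mul_div_mul_left _ _ (hm x)]

lemma eq_of_forall_notMem_of_countable {f g : ℂ → ℂ} (hf : Continuous f) (hg : Continuous g)
    {S : Set ℂ} (hS : S.Countable) (h : ∀ x ∉ S, f x = g x) : ∀ x, f x = g x :=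
  congrFun (hf.ext_on (hS.dense_compl ℝ) hg h)

section Theta

variable {τ : ℂ} {ϑ : ℂ → ℂ}

lemma theta_mul_theta_add_one (hper1 : ∀ z, ϑ (z + 1) = -ϑ z) (α β x : ℂ) :
    ϑ (x + 1 + α) * ϑ (x + 1 + β) = ϑ (x + α) * ϑ (x + β) := by
  rw [add_right_comm, hper1, add_right_comm, hper1, neg_mul_neg]

lemma theta_mul_theta_add_tau
    (hperτ : ∀ z : ℂ, ϑ (z + τ) =
      -cexp (-(Real.pi : ℂ) * I * τ) * cexp (-2 * (Real.pi : ℂ) * I * z) * ϑ z)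
    {α β c : ℂ} (hc : α + β = c) (x : ℂ) :
    ϑ (x + τ + α) * ϑ (x + τ + β) =
      cexp (-2 * Real.pi * I * (τ + 2 * x + c)) * (ϑ (x + α) * ϑ (x + β)) := by
  rw [add_right_comm, hperτ, add_right_comm, hperτ, ← hc]
  have hexp : cexp (-2 * Real.pi * I * (τ + 2 * x + (α + β))) =
      cexp (-(Real.pi : ℂ) * I * τ) * cexp (-2 * (Real.pi : ℂ) * I * (x + α)) *
        (cexp (-(Real.pi : ℂ) * I * τ) * cexp (-2 * (Real.pi : ℂ) * I * (x + β))) := by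
    simp only [← Complex.exp_add]
    ring_nf
  rw [hexp]
  ring

theorem exists_eq_const_mul_theta_mul_theta (hτ : τ.im ≠ 0) (hhol : Differentiable ℂ ϑ)
    (hzero : ∀ z, ϑ z = 0 → z ∈ lattice τ) (hderiv : deriv ϑ 0 ≠ 0)
    (hper1 : ∀ z, ϑ (z + 1) = -ϑ z) (hodd : ∀ z, ϑ (-z) = -ϑ z)
    (hperτ : ∀ z : ℂ, ϑ (z + τ) =
      -cexp (-(Real.pi : ℂ) * I * τ) * cexp (-2 * (Real.pi : ℂ) * I * z) * ϑ z)
    {c : ℂ} (hc : c ∉ lattice τ) {F : ℂ → ℂ} (hF : Differentiable ℂ F)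
    (hF1 : ∀ x, F (x + 1) = F x)
    (hFτ : ∀ x, F (x + τ) = cexp (-2 * Real.pi * I * (τ + 2 * x + c)) * F x)
    (hF0 : F 0 = 0) (hFc : F (-c) = 0) :
    ∃ K, ∀ x, F x = K * (ϑ x * ϑ (x + c)) := by
  have hθ0 : ϑ 0 = 0 := Function.Odd.map_zero hodd
  have hθc : ϑ c ≠ 0 := fun h => hc (hzero c h)
  have hG' (y : ℂ) :
      deriv (fun x => ϑ x * ϑ (x + c)) y = deriv ϑ y * ϑ (y + c) + ϑ y * deriv ϑ (y + c) :=
    ((hhol y).hasDerivAt.mul ((hhol (y + c)).hasDerivAt.comp_add_const y c)).deriv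
  refine exists_eq_const_mul_of_periodic_div hτ hF (by fun_prop) ?_ ?_ fun x hx => ?_
  · refine periodic_div_of_common_factor (m := 1) (fun _ => one_ne_zero) (by simpa using hF1)
      fun x => ?_
    simpa using theta_mul_theta_add_one hper1 0 c x
  · refine periodic_div_of_common_factor (fun _ => Complex.exp_ne_zero _) hFτ fun x => ?_
    simpa only [add_zero] using theta_mul_theta_add_tau hperτ (zero_add c) x
  rcases mul_eq_zero.mp hx with h | h
  · exact ⟨0, by simpa using hzero x h, hF0, by simp [hθ0],
      by simpa [hG', hθ0] using mul_ne_zero hderiv hθc⟩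
  · exact ⟨-c, by simpa using hzero _ h, hFc, by simp [hθ0],
      by simpa [hG', hθ0, hodd] using mul_ne_zero hθc hderiv⟩

theorem theta_three_term_of_notMem (hτ : τ.im ≠ 0) (hhol : Differentiable ℂ ϑ)
    (hzero : ∀ z, ϑ z = 0 → z ∈ lattice τ) (hderiv : deriv ϑ 0 ≠ 0)
    (hper1 : ∀ z, ϑ (z + 1) = -ϑ z) (hodd : ∀ z, ϑ (-z) = -ϑ z)
    (hperτ : ∀ z : ℂ, ϑ (z + τ) =
      -cexp (-(Real.pi : ℂ) * I * τ) * cexp (-2 * (Real.pi : ℂ) * I * z) * ϑ z)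
    {p b : ℂ} (hp : p ∉ lattice τ) (hb : b ∉ lattice τ) (hpb : p + b ∉ lattice τ) (s x : ℂ) :
    ϑ (x + p) * ϑ (x + b) * ϑ s * ϑ (s - p - b) - ϑ x * ϑ (x + p + b) * ϑ (s - p) * ϑ (s - b) =
      ϑ p * ϑ b * ϑ (s + x) * ϑ (s - p - b - x) := by
  have hθ0 : ϑ 0 = 0 := Function.Odd.map_zero hodd
  have hθ {w} (hw : w ∉ lattice τ) : ϑ w ≠ 0 := fun h => hw (hzero w h)
  set c := p + b with hc
  -- `ϑ (x + 0)` keeps all three products in the shape `ϑ (x + α) * ϑ (x + β)` with `α + β = c`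
  set T : ℂ → ℂ := fun x => ϑ s * ϑ (s - c) * (ϑ (x + p) * ϑ (x + b))
    - ϑ (s - p) * ϑ (s - b) * (ϑ (x + 0) * ϑ (x + c)) + ϑ p * ϑ b * (ϑ (x + (c - s)) * ϑ (x + s))
    with hT
  have hT1 (x : ℂ) : T (x + 1) = T x := by simp only [hT, theta_mul_theta_add_one hper1]
  have hTτ (x : ℂ) : T (x + τ) = cexp (-2 * Real.pi * I * (τ + 2 * x + c)) * T x := by
    simp only [hT, theta_mul_theta_add_tau hperτ hc.symm,
      theta_mul_theta_add_tau hperτ (zero_add c), theta_mul_theta_add_tau hperτ (sub_add_cancel c s)]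
    ring
  have hT0 : T 0 = 0 := by
    simp only [hT, zero_add, hθ0]
    rw [show c - s = -(s - c) by ring, hodd]
    ring
  have hTc : T (-c) = 0 := by
    simp only [hT]
    rw [show -c + p = -b by rw [hc]; ring, show -c + b = -p by rw [hc]; ring,
      show -c + (c - s) = -s by ring, show -c + s = s - c by ring, add_zero, neg_add_cancel]
    simp only [hodd, hθ0]
    ring
  have hTp : T (-p) = 0 := by
    simp only [hT]
    rw [show -p + (c - s) = -(s - b) by rw [hc]; ring, show -p + c = b by rw [hc]; ring,
      show -p + s = s - p by ring, add_zero, neg_add_cancel, hodd, hodd, hθ0]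
    ring
  obtain ⟨K, hK⟩ := exists_eq_const_mul_theta_mul_theta hτ hhol hzero hderiv hper1 hodd hperτ hpb
    (by fun_prop) hT1 hTτ hT0 hTc
  have hGp : ϑ (-p) * ϑ (-p + c) ≠ 0 := by
    rw [show -p + c = b by rw [hc]; ring, hodd]
    exact mul_ne_zero (neg_ne_zero.mpr (hθ hp)) (hθ hb)
  have hK0 : K = 0 := by simpa [hTp, hGp] using hK (-p)
  have hTx : T x = 0 := by rw [hK x, hK0, zero_mul]
  simp only [hT, hc] at hTx
  linear_combination (norm := ring_nf) hTx - ϑ p * ϑ b * ϑ (s + x) * hodd (s - p - b - x)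

theorem theta_three_term (hτ : τ.im ≠ 0) (hhol : Differentiable ℂ ϑ)
    (hzero : ∀ z, ϑ z = 0 → z ∈ lattice τ) (hderiv : deriv ϑ 0 ≠ 0)
    (hper1 : ∀ z, ϑ (z + 1) = -ϑ z) (hodd : ∀ z, ϑ (-z) = -ϑ z)
    (hperτ : ∀ z : ℂ, ϑ (z + τ) =
      -cexp (-(Real.pi : ℂ) * I * τ) * cexp (-2 * (Real.pi : ℂ) * I * z) * ϑ z)
    (p b s x : ℂ) :
    ϑ (x + p) * ϑ (x + b) * ϑ s * ϑ (s - p - b) - ϑ x * ϑ (x + p + b) * ϑ (s - p) * ϑ (s - b) =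
      ϑ p * ϑ b * ϑ (s + x) * ϑ (s - p - b - x) := by
  have hcont : Continuous ϑ := hhol.continuous
  revert p
  refine eq_of_forall_notMem_of_countable (by fun_prop) (by fun_prop) (countable_lattice τ)
    fun p hp => ?_
  revert b
  refine eq_of_forall_notMem_of_countable (by fun_prop) (by fun_prop)
    ((countable_lattice τ).union ((countable_lattice τ).preimage (add_right_injective p)))
    fun b hb => ?_
  rw [mem_union, not_or] at hb
  exact theta_three_term_of_notMem hτ hhol hzero hderiv hper1 hodd hperτ hp hb.1 hb.2 s x

end Theta

/-- The theta identity underlying relation EQ3 (Proposition 6.5). -/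
theorem theta_identity_EQ3
    (τ : ℂ) (hτ : 0 < τ.im)
    (ϑ : ℂ → ℂ)
    (hϑ_hol : Differentiable ℂ ϑ)
    (hϑ_zero : ∀ z : ℂ, ϑ z = 0 ↔ z ∈ lattice τ)
    (hϑ_deriv : deriv ϑ 0 = 1)
    (hϑ_per1 : ∀ z : ℂ, ϑ (z + 1) = -ϑ z)
    (hϑ_odd : ∀ z : ℂ, ϑ (-z) = -ϑ z)
    (hϑ_perτ : ∀ z : ℂ, ϑ (z + τ) =
      -Complex.exp (-(Real.pi : ℂ) * Complex.I * τ) *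
        Complex.exp (-2 * (Real.pi : ℂ) * Complex.I * z) * ϑ z)
    (u v z lam a : ℂ)
    (h1 : u - v - a ∉ lattice τ)
    (h2 : v + z ∉ lattice τ)
    (h3 : u + z - a ∉ lattice τ) :
    ϑ (v + z + lam) * ϑ (u + z + a) * ϑ (lam + 2 * a) / (ϑ (v + z) * ϑ (u + z - a))
      - ϑ (u - v + a) * ϑ (v + z + lam + 2 * a) * ϑ lam / (ϑ (u - v - a) * ϑ (v + z))
      - ϑ (2 * a) * ϑ (u - v - a - lam) * ϑ (u + z + lam + a) /
          (ϑ (u - v - a) * ϑ (u + z - a)) = 0 := by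
  have hθ {w : ℂ} (hw : w ∉ lattice τ) : ϑ w ≠ 0 := fun h => hw ((hϑ_zero w).mp h)
  have key := theta_three_term hτ.ne' hϑ_hol (fun w => (hϑ_zero w).mp) (by simp [hϑ_deriv])
    hϑ_per1 hϑ_odd hϑ_perτ (v + z) (2 * a) (u + z + a) lam
  field_simp [hθ h1, hθ h2, hθ h3]
  linear_combination (norm := ring_nf) key
end
end

section
/- Coassociativity of the coproduct Δ (Proposition 3.4 of the paper): with the fac data below, define for each decomposition v = v₁ + v₂ and each function P of colored variables of shape v the component Δ_{v₁,v₂}(P)(z, w) := (−1)^{(v₂, C̄v₁)} · P(z ⊔ w) / fac(z_w | z_z) — that is, P evaluated on the concatenated tuple, divided by fac of the second block against the first. Then Δ is coassociative: for all dimension vectors v₁, v₂, v₃, every function P of shape v₁+v₂+v₃, and all colored tuples z, w, y of shapes v₁, v₂, v₃, one has (−1)^{(v₂,C̄v₁) + (v₃,C̄(v₁+v₂))} · P(z⊔w⊔y) / ( fac(z_y | z_{z⊔w}) · fac(z_w | z_z) ) = (−1)^{(v₃,C̄v₂) + (v₂+v₃,C̄v₁)} · P(z⊔w⊔y) / ( fac(z_{w⊔y}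 | z_z) · fac(z_y | z_w) ). -/
noncomputable section

open Finset

/-- An `I`-colored tuple of complex variables of shape `v`. -/
def CTuple (I : Type*) (v : I → ℕ) : Type _ := (i : I) → Fin (v i) → ℂ

/-- Concatenation of colored tuples: the colored tuple `z ⊔ w` of shape `a + b`. -/
def cat {I : Type*} {a b : I → ℕ} (z : CTuple I a) (w : CTuple I b) :
    CTuple I (a + b) :=
  fun i => Fin.append (z i) (w i)

/-- The factor `fac(z_A | z_B) = fac₁(z_A|z_B) · fac₂(z_A|z_B)` attached to a quiver
`Q = (I, H)` with source and target maps `out, inc : H → I`, integers `m₁ h = m_h`,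
`m₂ h = m_{h*}`, parameters `t₁, t₂ ∈ ℂ`, and an arbitrary function `ϑ : ℂ → ℂ`
(division by zero is junk `0`). -/
def fac {I : Type*} [Fintype I] {H : Type*} [Fintype H]
    (ϑ : ℂ → ℂ) (t₁ t₂ : ℂ) (out inc : H → I) (m₁ m₂ : H → ℤ)
    {a b : I → ℕ} (zA : CTuple I a) (zB : CTuple I b) : ℂ :=
  (∏ α : I, ∏ s : Fin (a α), ∏ t : Fin (b α),
      ϑ (zA α s - zB α t + t₁ + t₂) / ϑ (zB α t - zA α s)) *
  ∏ h : H,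
    (∏ s : Fin (a (out h)), ∏ t : Fin (b (inc h)),
        ϑ (zB (inc h) t - zA (out h) s + (m₁ h : ℂ) * t₁)) *
    (∏ s : Fin (a (inc h)), ∏ t : Fin (b (out h)),
        ϑ (zB (out h) t - zA (inc h) s + (m₂ h : ℂ) * t₂))

/-- The `(k,l)` entry of the adjacency matrix `Ā` of the quiver. -/
def adjEntry {I : Type*} [DecidableEq I] {H : Type*} [Fintype H]
    (out inc : H → I) (k l : I) : ℕ :=
  (Finset.univ.filter (fun h : H => out h = k ∧ inc h = l)).card

/-- The sign exponent `(v₂, C̄ v₁) = ∑_{k,l} v₂(k)·(δ_{kl} − ā_{kl})·v₁(l)`. -/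
def signExp {I : Type*} [Fintype I] [DecidableEq I] {H : Type*} [Fintype H]
    (out inc : H → I) (v₂ v₁ : I → ℕ) : ℤ :=
  ∑ k : I, ∑ l : I,
    (v₂ k : ℤ) * ((if k = l then 1 else 0) - (adjEntry out inc k l : ℤ)) * (v₁ l : ℤ)

/-!
Both `fac` and the sign exponent `(·, C̄ ·)` split over concatenation in each argument
(`fac` is a product over pairs of variables, `(·, C̄ ·)` is bilinear), so both sides equal
`(−1)^{(v₂,C̄v₁)+(v₃,C̄v₁)+(v₃,C̄v₂)} · P(z⊔w⊔y) / (fac(z_y|z_z) · fac(z_y|z_w) · fac(z_w|z_z))`.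
-/

section Fac

variable {I : Type*} [Fintype I] {H : Type*} [Fintype H]
  (ϑ : ℂ → ℂ) (t₁ t₂ : ℂ) (out inc : H → I) (m₁ m₂ : H → ℤ)
  {a b c : I → ℕ} (zA : CTuple I a) (zB : CTuple I b) (zC : CTuple I c)

lemma fac_cat_right :
    fac ϑ t₁ t₂ out inc m₁ m₂ zA (cat zB zC)
      = fac ϑ t₁ t₂ out inc m₁ m₂ zA zB * fac ϑ t₁ t₂ out inc m₁ m₂ zA zC := by
  simp only [fac, cat, Pi.add_apply, Fin.prod_univ_add, Fin.append_left, Fin.append_right,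
    Finset.prod_mul_distrib]
  ring

lemma fac_cat_left :
    fac ϑ t₁ t₂ out inc m₁ m₂ (cat zA zB) zC
      = fac ϑ t₁ t₂ out inc m₁ m₂ zA zC * fac ϑ t₁ t₂ out inc m₁ m₂ zB zC := by
  simp only [fac, cat, Pi.add_apply, Fin.prod_univ_add, Fin.append_left, Fin.append_right,
    Finset.prod_mul_distrib]
  ring

end Fac

section SignExp

variable {I : Type*} [Fintype I] [DecidableEq I] {H : Type*} [Fintype H]
  (out inc : H → I) (a b c : I → ℕ)

lemma signExp_add_left :
    signExp out inc (a + b) c = signExp out inc a c + signExp out inc b c := by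
  simp only [signExp, Pi.add_apply, Nat.cast_add, add_mul, Finset.sum_add_distrib]

lemma signExp_add_right :
    signExp out inc a (b + c) = signExp out inc a b + signExp out inc a c := by
  simp only [signExp, Pi.add_apply, Nat.cast_add, mul_add, Finset.sum_add_distrib]

end SignExp

/-- Coassociativity of the coproduct `Δ` (Proposition 3.4): for all shapes `v₁, v₂, v₃`,
every function `P` of shape `v₁+v₂+v₃` and colored tuples `z, w, y`,
`(−1)^{(v₂,C̄v₁)+(v₃,C̄(v₁+v₂))}·P(z⊔w⊔y)/(fac(z_y|z_{z⊔w})·fac(z_w|z_z))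
 = (−1)^{(v₃,C̄v₂)+(v₂+v₃,C̄v₁)}·P(z⊔w⊔y)/(fac(z_{w⊔y}|z_z)·fac(z_y|z_w))`. -/
theorem coproduct_coassociative {I : Type*} [Fintype I] [DecidableEq I]
    {H : Type*} [Fintype H]
    (ϑ : ℂ → ℂ) (t₁ t₂ : ℂ) (out inc : H → I) (m₁ m₂ : H → ℤ)
    (v₁ v₂ v₃ : I → ℕ) (P : CTuple I (v₁ + v₂ + v₃) → ℂ)
    (z : CTuple I v₁) (w : CTuple I v₂) (y : CTuple I v₃) :
    (-1 : ℂ) ^ (signExp out inc v₂ v₁ + signExp out inc v₃ (v₁ + v₂)) *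
        P (cat (cat z w) y) /
        (fac ϑ t₁ t₂ out inc m₁ m₂ y (cat z w) * fac ϑ t₁ t₂ out inc m₁ m₂ w z)
      = (-1 : ℂ) ^ (signExp out inc v₃ v₂ + signExp out inc (v₂ + v₃) v₁) *
          P (cat (cat z w) y) /
          (fac ϑ t₁ t₂ out inc m₁ m₂ (cat w y) z * fac ϑ t₁ t₂ out inc m₁ m₂ y w) := by
  rw [fac_cat_right, fac_cat_left, signExp_add_right, signExp_add_left,
    add_comm (signExp out inc v₃ v₂), add_assoc]
  ring
end
end
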